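/- Let F be a field of characteristic 0, R = F[h, c] the polynomial algebra in two commuting variables, and φ the F-algebra automorphism of R determined by φ(h) = h − 1 and φ(c) = c. Then the φ-fixed subalgebra {r ∈ R : φ(r) = r} equals F[c] (the subalgebra of polynomials in c alone), and every ideal J of R with φ(J) ⊆ J is generated, as an ideal of R, by J ∩ F[c]. -/

import Mathlib

/-!
Under `finSuccEquiv : F[h, c] ≃ F[c][h]` the automorphism `φ` becomes the Taylor shift
`p(h) ↦ p(h - 1)` over `A = F[c]`. If `p` has degree `d > 0`, the coefficient of `h ^ (d - 1)` in
`p(h - 1) - p(h)` is `-d • lc(p)`, a unit multiple of the leading coefficient because `d` is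
invertible in characteristic zero. Hence the fixed points are the constants, and for a stable
ideal `J` induction on the degree (applied to `f(h - 1) - f(h)` and then to `f` minus its leading
term) puts every coefficient of every `f ∈ J` into `J`, so `J` is generated by `J ∩ A`.
-/

open Polynomial

namespace Polynomial

variable {A : Type*} [CommRing A]

theorem coeff_taylor_sub_self_natDegree_sub_one (r : A) (p : A[X]) :
    (taylor r p - p).coeff (p.natDegree - 1) = p.natDegree * r * p.leadingCoeff := by
  rcases Nat.eq_zero_or_pos p.natDegree with hp | hp
  · rw [hp, Nat.cast_zero, zero_mul, zero_mul, eq_C_of_natDegree_eq_zero hp, taylor_C, sub_self,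
      coeff_zero]
  have hle : (hasseDeriv (p.natDegree - 1) p).natDegree ≤ 1 :=
    (natDegree_hasseDeriv_le p _).trans (by omega)
  rw [coeff_sub, taylor_coeff, eq_X_add_C_of_natDegree_le_one hle]
  simp only [eval_add, eval_mul, eval_C, eval_X, hasseDeriv_coeff, zero_add,
    Nat.add_sub_cancel' hp, Nat.choose_self, Nat.choose_symm hp, Nat.choose_one_right,
    leadingCoeff]
  push_cast
  ring

theorem natDegree_taylor_sub_self_lt (r : A) {p : A[X]} (hp : 0 < p.natDegree) :
    (taylor r p - p).natDegree < p.natDegree := by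
  have hp0 : p ≠ 0 := ne_zero_of_natDegree_gt hp
  by_cases h : taylor r p - p = 0
  · rwa [h, natDegree_zero]
  refine natDegree_lt_natDegree h ?_
  rw [← degree_taylor p r]
  exact degree_sub_lt_left (degree_taylor p r) ((taylor_eq_zero r p).not.mpr hp0)
    (leadingCoeff_taylor r p)

section RatAlgebra

variable [Algebra ℚ A] {r : A}

theorem isUnit_natCast_mul (hr : IsUnit r) {n : ℕ} (hn : n ≠ 0) : IsUnit ((n : A) * r) := by
  refine IsUnit.mul ?_ hr
  rw [← map_natCast (algebraMap ℚ A)]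
  exact (IsUnit.mk0 (n : ℚ) (Nat.cast_ne_zero.mpr hn)).map _

theorem taylor_eq_self_iff (hr : IsUnit r) {p : A[X]} : taylor r p = p ↔ p ∈ Set.range C := by
  refine ⟨fun hfix ↦ natDegree_eq_zero.mp ?_, fun ⟨a, ha⟩ ↦ ha ▸ taylor_C r a⟩
  by_contra hp
  have hlc := coeff_taylor_sub_self_natDegree_sub_one r p
  rw [hfix, sub_self, coeff_zero, eq_comm, (isUnit_natCast_mul hr hp).mul_right_eq_zero,
    leadingCoeff_eq_zero] at hlc
  exact hp (hlc ▸ natDegree_zero)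

theorem C_coeff_mem_of_taylor_mem (hr : IsUnit r) {J : Ideal A[X]}
    (hJ : ∀ f ∈ J, taylor r f ∈ J) {f : A[X]} (hf : f ∈ J) (n : ℕ) :
    C (f.coeff n) ∈ J := by
  induction hd : f.natDegree using Nat.strong_induction_on generalizing f n with
  | _ d ih =>
  rcases Nat.eq_zero_or_pos d with rfl | hpos
  · rw [eq_C_of_natDegree_eq_zero hd] at hf ⊢
    rw [coeff_C]
    split_ifs
    exacts [hf, by simp]
  have hlc : C f.leadingCoeff ∈ J := by
    have hΔ := ih _ (hd ▸ natDegree_taylor_sub_self_lt r (hd ▸ hpos)) (J.sub_mem (hJ f hf) hf)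
      (f.natDegree - 1) rfl
    rw [coeff_taylor_sub_self_natDegree_sub_one, map_mul] at hΔ
    obtain ⟨u, hu⟩ := (isUnit_natCast_mul hr (hd ▸ hpos.ne')).map C
    simpa [← hu] using J.mul_mem_left (↑u⁻¹ : A[X]) hΔ
  have herase : f.eraseLead ∈ J := by
    rw [← self_sub_monomial_natDegree_leadingCoeff, ← C_mul_X_pow_eq_monomial]
    exact J.sub_mem hf (J.mul_mem_right _ hlc)
  by_cases hn : n = f.natDegree
  · rwa [hn]
  rw [← eraseLead_coeff_of_ne n hn]
  exact ih _ (by have := eraseLead_natDegree_le f; omega) herase n rfl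

theorem eq_span_inter_range_C_of_taylor_mem (hr : IsUnit r) {J : Ideal A[X]}
    (hJ : ∀ f ∈ J, taylor r f ∈ J) : J = Ideal.span ((J : Set A[X]) ∩ Set.range C) := by
  refine le_antisymm (fun f hf ↦ ?_) (Ideal.span_le.mpr Set.inter_subset_left)
  rw [← Set.image_preimage_eq_inter_range, ← Ideal.map_span, ← Ideal.coe_comap, Ideal.span_eq]
  exact Ideal.mem_map_C_iff.mpr (C_coeff_mem_of_taylor_mem hr hJ hf)

end RatAlgebra

end Polynomial

namespace MvPolynomial

variable {R : Type*} [CommRing R]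

theorem finSuccEquiv_apply_eq_taylor {n : ℕ} (r : R)
    (φ : MvPolynomial (Fin (n + 1)) R →ₐ[R] MvPolynomial (Fin (n + 1)) R)
    (h0 : φ (X 0) = X 0 + C r) (hsucc : ∀ j : Fin n, φ (X j.succ) = X j.succ)
    (p : MvPolynomial (Fin (n + 1)) R) :
    finSuccEquiv R n (φ p) = taylor (C r) (finSuccEquiv R n p) := by
  have hcomp : (finSuccEquiv R n).toAlgHom.comp φ =
      ((taylorAlgHom (C r : MvPolynomial (Fin n) R)).restrictScalars R).comp
        (finSuccEquiv R n).toAlgHom := by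
    refine algHom_ext fun i ↦ Fin.cases ?_ (fun j ↦ ?_) i
    · simp [h0, taylor_X, finSuccEquiv_apply]
    · simp [hsucc, finSuccEquiv_X_succ]
  exact DFunLike.congr_fun hcomp p

theorem mem_adjoin_X_one_iff (p : MvPolynomial (Fin 2) R) :
    p ∈ Algebra.adjoin R {X 1} ↔ finSuccEquiv R 1 p ∈ Set.range Polynomial.C := by
  rw [Set.mem_range, ← natDegree_eq_zero, natDegree_finSuccEquiv, ← Set.image_singleton]
  change p ∈ supported R {1} ↔ _
  rw [mem_supported, ← not_ne_iff, ← mem_vars_iff_degreeOf_ne_zero]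
  constructor
  · exact fun h h0 ↦ absurd (h h0) (by decide)
  · intro h i hi
    fin_cases i
    exacts [absurd hi h, rfl]

end MvPolynomial

theorem Ideal.comap_span_of_equiv {R S : Type*} [Semiring R] [Semiring S] (e : R ≃+* S)
    (s : Set S) : (Ideal.span s).comap e = Ideal.span (e ⁻¹' s) := by
  rw [← Ideal.map_symm, Ideal.map_span, e.symm.image_eq_preimage_symm, e.symm_symm]

/-- Let `F` have characteristic `0`, `R = F[h, c]` (with `h = X 0`,
`c = X 1`), and `φ` the `F`-algebra automorphism with `φ(h) = h − 1`, `φ(c) = c`.  Then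
the `φ`-fixed subalgebra is `F[c]`, and every `φ`-stable ideal `J` of `R` is generated,
as an ideal of `R`, by `J ∩ F[c]`. -/
theorem stmt_12 {F : Type*} [Field F] [CharZero F]
    (φ : MvPolynomial (Fin 2) F ≃ₐ[F] MvPolynomial (Fin 2) F)
    (hφh : φ (MvPolynomial.X 0) = MvPolynomial.X 0 - 1)
    (hφc : φ (MvPolynomial.X 1) = MvPolynomial.X 1) :
    ({r : MvPolynomial (Fin 2) F | φ r = r} =
      ↑(Algebra.adjoin F {(MvPolynomial.X 1 : MvPolynomial (Fin 2) F)})) ∧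
    (∀ J : Ideal (MvPolynomial (Fin 2) F), (∀ f ∈ J, φ f ∈ J) →
      J = Ideal.span ((J : Set (MvPolynomial (Fin 2) F)) ∩
        ↑(Algebra.adjoin F {(MvPolynomial.X 1 : MvPolynomial (Fin 2) F)}))) := by
  set e := (MvPolynomial.finSuccEquiv F 1).toRingEquiv
  have hconj : ∀ p, e (φ p) = taylor (MvPolynomial.C (-1)) (e p) :=
    MvPolynomial.finSuccEquiv_apply_eq_taylor (-1) φ.toAlgHom
      (by rw [map_neg, map_one, ← sub_eq_add_neg]; exact hφh) (Fin.forall_fin_one.mpr hφc)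
  have hunit : IsUnit (MvPolynomial.C (-1) : MvPolynomial (Fin 1) F) := isUnit_one.neg.map _
  have hadjoin : e ⁻¹' Set.range Polynomial.C =
      Algebra.adjoin F {(MvPolynomial.X 1 : MvPolynomial (Fin 2) F)} :=
    Set.ext fun p ↦ (MvPolynomial.mem_adjoin_X_one_iff p).symm
  constructor
  · ext p
    rw [← hadjoin, Set.mem_ofPred_eq, Set.mem_preimage, ← taylor_eq_self_iff hunit, ← hconj,
      e.injective.eq_iff]
  · intro J hJ
    have hstable : ∀ f ∈ J.map e, taylor (MvPolynomial.C (-1)) f ∈ J.map e := by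
      intro f hf
      rw [← Ideal.symm_apply_mem_of_equiv_iff] at hf
      rw [← e.apply_symm_apply f, ← hconj]
      exact Ideal.mem_map_of_mem e (hJ _ hf)
    calc J = (J.map e).comap e := (Ideal.comap_map_of_bijective e e.bijective).symm
      _ = (Ideal.span ((J.map e : Set _) ∩ Set.range Polynomial.C)).comap e :=
          congrArg _ (eq_span_inter_range_C_of_taylor_mem hunit hstable)
      _ = _ := by
          rw [Ideal.comap_span_of_equiv, Set.preimage_inter, hadjoin, ← Ideal.coe_comap,
            Ideal.comap_map_of_bijective e e.bijective]
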